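/- Let I be a nonempty independent set of a graph G with surp(I) ≤ 0 that is a critical-set. If G has a vertex cover of size at most k, then G has a vertex cover C of size at most k with I ∩ C = ∅ (equivalently, N(I) ⊆ C). -/
import Mathlib


open Finset

/-- `I` is an independent set of vertices in `G`. -/
def IsIndep {V : Type*} (G : SimpleGraph V) (I : Finset V) : Prop :=
  ∀ u ∈ I, ∀ v ∈ I, ¬ G.Adj u v

open Classical in
/-- The (open) neighborhood `N(I)` of a vertex set `I`. -/
noncomputable def nbr {V : Type*} [Fintype V] (G : SimpleGraph V) (I : Finset V) : Finset V :=
  Finset.univ.filter (fun v => v ∉ I ∧ ∃ u ∈ I, G.Adj u v)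

/-- The surplus `|N(I)| - |I|` of a vertex set `I`. -/
noncomputable def surp {V : Type*} [Fintype V] (G : SimpleGraph V) (I : Finset V) : ℤ :=
  ((nbr G I).card : ℤ) - (I.card : ℤ)

/-- `C` is a vertex cover of `G`. -/
def IsCover {V : Type*} (G : SimpleGraph V) (C : Finset V) : Prop :=
  ∀ u v, G.Adj u v → u ∈ C ∨ v ∈ C

lemma mem_nbr {V : Type*} [Fintype V] (G : SimpleGraph V) (I : Finset V) (v : V) :
    v ∈ nbr G I ↔ v ∉ I ∧ ∃ u ∈ I, G.Adj u v := by
  classical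
  simp [nbr]

/-- For a critical-set `I` with surplus at most `0`, if `G` has a vertex cover of size at
most `k`, then it has one disjoint from `I` (equivalently, containing `N(I)`). -/
theorem critical_set_nonpositive_surplus_cover {V : Type*} [Fintype V] [DecidableEq V]
    (G : SimpleGraph V) (I : Finset V) (k : ℕ)
    (hne : I.Nonempty) (hind : IsIndep G I)
    (hcrit : ∀ J ⊆ I, J.Nonempty → surp G I ≤ surp G J)
    (hsurp : surp G I ≤ 0)
    (hcov : ∃ C : Finset V, IsCover G C ∧ C.card ≤ k) :
    ∃ C : Finset V, IsCover G C ∧ C.card ≤ k ∧ I ∩ C = ∅ ∧ nbr G I ⊆ C := by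
  classical
  obtain ⟨C0, hC0, hk⟩ := hcov
  unfold surp at hsurp
  set N := nbr G I with hN
  set J := I \ C0 with hJ
  have hJI : J ⊆ I := sdiff_subset
  -- neighbors of J lie in C0 ∩ N
  have hnbrJ : nbr G J ⊆ C0 ∩ N := by
    intro v hv
    rw [mem_nbr] at hv
    obtain ⟨hvJ, u, huJ, hadj⟩ := hv
    have huI : u ∈ I := hJI huJ
    have huC : u ∉ C0 := by
      rw [hJ, mem_sdiff] at huJ; exact huJ.2
    have hvI : v ∉ I := fun hvI => hind u huI v hvI hadj
    have hvC : v ∈ C0 := by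
      rcases hC0 u v hadj with h | h
      · exact absurd h huC
      · exact h
    exact mem_inter.2 ⟨hvC, (mem_nbr G I v).2 ⟨hvI, u, huI, hadj⟩⟩
  have hdisj : Disjoint (C0 ∩ I) (C0 ∩ N) := by
    rw [disjoint_left]
    intro a ha hb
    exact ((mem_nbr G I a).1 (mem_inter.1 hb).2).1 (mem_inter.1 ha).2
  -- key counting inequality
  have hkey : N.card ≤ (C0 ∩ I).card + (C0 ∩ N).card := by
    rcases J.eq_empty_or_nonempty with hJe | hJne
    · have hIC : I ⊆ C0 := by
        intro x hx
        by_contra hxc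
        have : x ∈ J := mem_sdiff.2 ⟨hx, hxc⟩
        simp [hJe] at this
      have h1 : C0 ∩ I = I := inter_eq_right.2 hIC
      have h2 : N.card ≤ I.card := by exact_mod_cast sub_nonpos.mp hsurp
      rw [h1]; omega
    · have h1 := hcrit J hJI hJne
      unfold surp at h1
      rw [← hN] at h1
      have h2 : (nbr G J).card ≤ (C0 ∩ N).card := card_le_card hnbrJ
      have h3 : J.card + (I ∩ C0).card = I.card := by
        rw [hJ]; exact card_sdiff_add_card_inter I C0
      have h4 : I ∩ C0 = C0 ∩ I := inter_comm _ _
      rw [h4] at h3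
      omega
  refine ⟨(C0 \ (I ∪ N)) ∪ N, ?_, ?_, ?_, subset_union_right⟩
  · -- cover
    intro u v hadj
    have key : ∀ w x, G.Adj w x → w ∈ C0 → w ∈ (C0 \ (I ∪ N)) ∪ N ∨ x ∈ (C0 \ (I ∪ N)) ∪ N := by
      intro w x hwx hwC
      by_cases hwI : w ∈ I
      · right
        have hxI : x ∉ I := fun hxI => hind w hwI x hxI hwx
        exact mem_union_right _ ((mem_nbr G I x).2 ⟨hxI, w, hwI, hwx⟩)
      · by_cases hwN : w ∈ N
        · exact Or.inl (mem_union_right _ hwN)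
        · exact Or.inl (mem_union_left _ (mem_sdiff.2 ⟨hwC, by simp [hwI, hwN]⟩))
    rcases hC0 u v hadj with h | h
    · exact key u v hadj h
    · exact (key v u hadj.symm h).symm
  · -- cardinality
    have h1 : ((C0 \ (I ∪ N)) ∪ N).card ≤ (C0 \ (I ∪ N)).card + N.card := card_union_le _ _
    have h2 : (C0 \ (I ∪ N)).card + (C0 ∩ (I ∪ N)).card = C0.card :=
      card_sdiff_add_card_inter C0 (I ∪ N)
    have h3 : C0 ∩ (I ∪ N) = (C0 ∩ I) ∪ (C0 ∩ N) := inter_union_distrib_left _ _ _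
    have h4 : (C0 ∩ (I ∪ N)).card = (C0 ∩ I).card + (C0 ∩ N).card := by
      rw [h3, card_union_of_disjoint hdisj]
    omega
  · -- disjoint from I
    ext x
    simp only [mem_inter, mem_union, mem_sdiff, notMem_empty, iff_false]
    rintro ⟨hxI, h | hxN⟩
    · exact h.2 (Or.inl hxI)
    · exact ((mem_nbr G I x).1 hxN).1 hxI
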